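/- Define M(k) := ∑_{j=0}^∞ (Γ(j + 3/2)/Γ(3/2)) · k^j/(j!)² and ω(k) := (π/4) · M(k)² / ((1 + k) · e^{2k}) for k ≥ 0. Then ω(k) tends to 1 as k → ∞. -/

import Mathlib

open Real Filter

/-- The confluent hypergeometric series `₁F₁(3/2; 1; k)` written out as
`∑_{j≥0} (Γ(j+3/2)/Γ(3/2)) · k^j / (j!)²`. -/
noncomputable def hyperM (k : ℝ) : ℝ :=
  ∑' j : ℕ, (Real.Gamma ((j : ℝ) + 3 / 2) / Real.Gamma (3 / 2)) * k ^ j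
    / ((Nat.factorial j : ℝ)) ^ 2

/-- `ω(k) = (π/4)·₁F₁²(3/2;1;k)/((1+k)·e^{2k})`. -/
noncomputable def omegaFun (k : ℝ) : ℝ :=
  (π / 4) * (hyperM k) ^ 2 / ((1 + k) * Real.exp (2 * k))

/-!
Put `w_j = k^j / j!`, so that `Γ(3/2) M(k) = ∑ (Γ(j+3/2)/j!) w_j` and `w / e^k` is the Poisson law
of mean and variance `k`. Log-convexity of `Γ` gives `Γ(y + 1/2) ≤ √y Γ(y)`, which squeezes
`Γ(j+3/2)/j!` between `√(j+1/2)` and `√(j+1)`. Bounding `√` above by its tangent line at `k + 1`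
and below by a quadratic touching it at `k`, only the first two Poisson moments enter, and
`(√k - 1/(2√k)) e^k ≤ Γ(3/2) M(k) ≤ √(k+1) e^k`. As `Γ(3/2)² = π/4`, this says
`(k-1)/(k+1) ≤ ω(k) ≤ 1`.
-/

open scoped Nat

theorem Real.Gamma_add_half_le_sqrt_mul_Gamma {y : ℝ} (hy : 0 < y) :
    Gamma (y + 1 / 2) ≤ √y * Gamma y := by
  have hΓ : 0 < Gamma y := Gamma_pos_of_pos hy
  have h := Gamma_mul_add_mul_le_rpow_Gamma_mul_rpow_Gamma hy (by linarith : 0 < y + 1)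
    (by norm_num : (0 : ℝ) < 1 / 2) (by norm_num : (0 : ℝ) < 1 / 2) (by norm_num)
  rw [Gamma_add_one hy.ne', ← sqrt_eq_rpow, ← sqrt_eq_rpow, sqrt_mul hy.le] at h
  calc Gamma (y + 1 / 2) = Gamma (1 / 2 * y + 1 / 2 * (y + 1)) := by ring_nf
    _ ≤ √(Gamma y) * (√y * √(Gamma y)) := h
    _ = √y * Gamma y := by rw [mul_left_comm, mul_self_sqrt hΓ.le]

theorem Real.Gamma_nat_add_three_halves_le (j : ℕ) : Gamma (j + 3 / 2) ≤ √(j + 1) * j ! := by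
  have h := Gamma_add_half_le_sqrt_mul_Gamma (by positivity : (0 : ℝ) < j + 1)
  rwa [Gamma_nat_eq_factorial, show (j : ℝ) + 1 + 1 / 2 = j + 3 / 2 by ring] at h

theorem Real.sqrt_mul_factorial_le_Gamma_nat_add_three_halves (j : ℕ) :
    √(j + 1 / 2) * j ! ≤ Gamma (j + 3 / 2) := by
  have hy : (0 : ℝ) < j + 1 / 2 := by positivity
  have h := Gamma_add_half_le_sqrt_mul_Gamma hy
  rw [show (j : ℝ) + 1 / 2 + 1 / 2 = j + 1 by ring, Gamma_nat_eq_factorial] at h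
  calc √(j + 1 / 2) * j ! ≤ √(j + 1 / 2) * (√(j + 1 / 2) * Gamma (j + 1 / 2)) := by gcongr
    _ = (j + 1 / 2) * Gamma (j + 1 / 2) := by rw [← mul_assoc, mul_self_sqrt hy.le]
    _ = Gamma (j + 3 / 2) := by
      rw [← Gamma_add_one hy.ne']; ring_nf

theorem Real.Gamma_three_halves_sq : Gamma (3 / 2) ^ 2 = π / 4 := by
  rw [show (3 / 2 : ℝ) = 1 / 2 + 1 by norm_num, Gamma_add_one (by norm_num), Gamma_one_half_eq,
    mul_pow, sq_sqrt pi_pos.le]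
  ring

theorem Real.sqrt_le_tangent_line {s x : ℝ} (hs : 0 < s) (hx : 0 ≤ x) :
    √x ≤ s + (x - s ^ 2) / (2 * s) := by
  obtain ⟨a, ha, rfl⟩ : ∃ a, 0 ≤ a ∧ x = a ^ 2 := ⟨√x, sqrt_nonneg x, (sq_sqrt hx).symm⟩
  rw [sqrt_sq ha, ← sub_nonneg,
    show s + (a ^ 2 - s ^ 2) / (2 * s) - a = (a - s) ^ 2 / (2 * s) by field_simp; ring]
  positivity

theorem Real.quadratic_le_sqrt {b x : ℝ} (hb : 0 < b) (hx : 0 ≤ x) :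
    b + (x - b ^ 2) / (2 * b) - (x - b ^ 2) ^ 2 / (2 * b ^ 3) ≤ √x := by
  obtain ⟨a, ha, rfl⟩ : ∃ a, 0 ≤ a ∧ x = a ^ 2 := ⟨√x, sqrt_nonneg x, (sq_sqrt hx).symm⟩
  rw [sqrt_sq ha, ← sub_nonneg, show a - (b + (a ^ 2 - b ^ 2) / (2 * b)
      - (a ^ 2 - b ^ 2) ^ 2 / (2 * b ^ 3)) = (a - b) ^ 2 * a * (a + 2 * b) / (2 * b ^ 3) by
    field_simp; ring]
  positivity

section PoissonMoments

variable (k : ℝ)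

theorem hasSum_pow_div_factorial : HasSum (fun j : ℕ => k ^ j / j !) (exp k) :=
  exp_eq_exp_ℝ ▸ NormedSpace.expSeries_div_hasSum_exp k

theorem succ_mul_pow_succ_div_factorial (n : ℕ) :
    ((n : ℝ) + 1) * (k ^ (n + 1) / (n + 1)!) = k * (k ^ n / n !) := by
  rw [Nat.factorial_succ]
  push_cast
  field_simp
  ring

theorem hasSum_natCast_mul_pow_div_factorial :
    HasSum (fun j : ℕ => (j : ℝ) * (k ^ j / j !)) (k * exp k) := by
  rw [← hasSum_nat_add_iff' 1]
  simpa [succ_mul_pow_succ_div_factorial] using (hasSum_pow_div_factorial k).mul_left k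

theorem hasSum_natCast_mul_sub_one_mul_pow_div_factorial :
    HasSum (fun j : ℕ => (j : ℝ) * (j - 1) * (k ^ j / j !)) (k ^ 2 * exp k) := by
  rw [← hasSum_nat_add_iff' 1]
  simp only [Finset.range_one, Finset.sum_singleton, CharP.cast_eq_zero, zero_mul, sub_zero]
  rw [sq, mul_assoc]
  refine ((hasSum_natCast_mul_pow_div_factorial k).mul_left k).congr_fun fun n => ?_
  push_cast
  rw [add_sub_cancel_right, mul_right_comm, succ_mul_pow_succ_div_factorial]
  ring

theorem hasSum_quadratic_sub_mul_pow_div_factorial (a b c : ℝ) :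
    HasSum (fun j : ℕ => (a + b * (j - k) + c * (j - k) ^ 2) * (k ^ j / j !))
      ((a + c * k) * exp k) := by
  have h := (((hasSum_pow_div_factorial k).mul_left (a - b * k + c * k ^ 2)).add
    ((hasSum_natCast_mul_pow_div_factorial k).mul_left (b - 2 * c * k + c))).add
    ((hasSum_natCast_mul_sub_one_mul_pow_div_factorial k).mul_left c)
  rw [show (a + c * k) * exp k = (a - b * k + c * k ^ 2) * exp k
    + (b - 2 * c * k + c) * (k * exp k) + c * (k ^ 2 * exp k) by ring]
  exact h.congr_fun fun j => by ring

end PoissonMoments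

theorem Gamma_three_halves_mul_hyperM (k : ℝ) :
    Gamma (3 / 2) * hyperM k = ∑' j : ℕ, Gamma (j + 3 / 2) / j ! * (k ^ j / j !) := by
  have hΓ : Gamma (3 / 2) ≠ 0 := (Gamma_pos_of_pos (by norm_num)).ne'
  rw [hyperM, ← tsum_mul_left]
  congr 1 with j
  field_simp

theorem omegaFun_eq (k : ℝ) :
    omegaFun k = (Gamma (3 / 2) * hyperM k) ^ 2 / ((1 + k) * exp k ^ 2) := by
  rw [omegaFun, mul_pow, Gamma_three_halves_sq, ← exp_nat_mul]
  norm_num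

section Omega

variable {k : ℝ}

-- Both bounds are written in the shape of `hasSum_quadratic_sub_mul_pow_div_factorial`.
theorem Gamma_div_factorial_le (hk : 0 ≤ k) (j : ℕ) :
    Gamma (j + 3 / 2) / j ! ≤ √(k + 1) + 1 / (2 * √(k + 1)) * (j - k) + 0 * (j - k) ^ 2 := by
  have hs : 0 < √(k + 1) := sqrt_pos.2 (by linarith)
  calc Gamma (j + 3 / 2) / j ! ≤ √(j + 1) := by
        rw [div_le_iff₀ (by positivity)]; exact Gamma_nat_add_three_halves_le j
    _ ≤ √(k + 1) + ((j + 1) - √(k + 1) ^ 2) / (2 * √(k + 1)) :=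
        sqrt_le_tangent_line hs (by positivity)
    _ = _ := by rw [sq_sqrt (by linarith)]; ring

theorem le_Gamma_div_factorial (hk : 0 < k) (j : ℕ) :
    √k + 1 / (2 * √k) * (j - k) + (-1 / (2 * √k ^ 3)) * (j - k) ^ 2 ≤ Gamma (j + 3 / 2) / j ! := by
  calc √k + 1 / (2 * √k) * (j - k) + (-1 / (2 * √k ^ 3)) * (j - k) ^ 2
        = √k + (j - √k ^ 2) / (2 * √k) - (j - √k ^ 2) ^ 2 / (2 * √k ^ 3) := by
          rw [sq_sqrt hk.le]; ring
    _ ≤ √j := quadratic_le_sqrt (sqrt_pos.2 hk) (Nat.cast_nonneg j)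
    _ ≤ √(j + 1 / 2) := sqrt_le_sqrt (by linarith)
    _ ≤ Gamma (j + 3 / 2) / j ! := by
        rw [le_div_iff₀ (by positivity)]; exact sqrt_mul_factorial_le_Gamma_nat_add_three_halves j

theorem summable_Gamma_div_factorial_mul (hk : 0 ≤ k) :
    Summable fun j : ℕ => Gamma (j + 3 / 2) / j ! * (k ^ j / j !) :=
  (hasSum_quadratic_sub_mul_pow_div_factorial k _ _ _).summable.of_nonneg_of_le
    (fun j => by positivity)
    (fun j => mul_le_mul_of_nonneg_right (Gamma_div_factorial_le hk j) (by positivity))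

theorem Gamma_three_halves_mul_hyperM_le (hk : 0 ≤ k) :
    Gamma (3 / 2) * hyperM k ≤ √(k + 1) * exp k := by
  rw [Gamma_three_halves_mul_hyperM, ← add_zero √(k + 1), ← zero_mul k]
  exact hasSum_le (fun j => mul_le_mul_of_nonneg_right (Gamma_div_factorial_le hk j)
      (by positivity)) (summable_Gamma_div_factorial_mul hk).hasSum
    (hasSum_quadratic_sub_mul_pow_div_factorial k _ _ _)

theorem sub_mul_exp_le_Gamma_three_halves_mul_hyperM (hk : 0 < k) :
    (√k - 1 / (2 * √k)) * exp k ≤ Gamma (3 / 2) * hyperM k := by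
  rw [Gamma_three_halves_mul_hyperM, show √k - 1 / (2 * √k) = √k + (-1 / (2 * √k ^ 3)) * k by
    rw [pow_succ, sq_sqrt hk.le]; field_simp; ring]
  exact hasSum_le (fun j => mul_le_mul_of_nonneg_right (le_Gamma_div_factorial hk j)
      (by positivity)) (hasSum_quadratic_sub_mul_pow_div_factorial k _ _ _)
    (summable_Gamma_div_factorial_mul hk.le).hasSum

theorem omegaFun_le_one (hk : 0 ≤ k) : omegaFun k ≤ 1 := by
  have hM : 0 ≤ Gamma (3 / 2) * hyperM k := by
    rw [Gamma_three_halves_mul_hyperM]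
    exact tsum_nonneg fun j => by positivity
  rw [omegaFun_eq, div_le_one (by positivity)]
  calc (Gamma (3 / 2) * hyperM k) ^ 2 ≤ (√(k + 1) * exp k) ^ 2 :=
        pow_le_pow_left₀ hM (Gamma_three_halves_mul_hyperM_le hk) 2
    _ = (1 + k) * exp k ^ 2 := by rw [mul_pow, sq_sqrt (by linarith), add_comm]

theorem sub_one_div_add_one_le_omegaFun (hk : 1 / 2 ≤ k) : (k - 1) / (k + 1) ≤ omegaFun k := by
  have hk0 : 0 < k := by linarith
  have hs : 0 < √k := sqrt_pos.2 hk0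
  have hs2 : √k ^ 2 = k := sq_sqrt hk0.le
  have hlow : 0 ≤ √k - 1 / (2 * √k) := by
    rw [sub_nonneg, div_le_iff₀ (by positivity)]; nlinarith
  rw [omegaFun_eq, add_comm 1 k, mul_comm (k + 1), ← div_div]
  gcongr
  rw [le_div_iff₀ (by positivity)]
  calc (k - 1) * exp k ^ 2 ≤ ((√k - 1 / (2 * √k)) * exp k) ^ 2 := by
        rw [mul_pow]
        gcongr
        rw [← sub_nonneg, show (√k - 1 / (2 * √k)) ^ 2 - (k - 1) = 1 / (4 * k) by
          field_simp; rw [hs2]; ring]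
        positivity
    _ ≤ (Gamma (3 / 2) * hyperM k) ^ 2 :=
        pow_le_pow_left₀ (by positivity) (sub_mul_exp_le_Gamma_three_halves_mul_hyperM hk0) 2

end Omega

theorem tendsto_sub_one_div_add_one_atTop :
    Tendsto (fun k : ℝ => (k - 1) / (k + 1)) atTop (nhds 1) := by
  have h : Tendsto (fun k : ℝ => 1 - 2 / (k + 1)) atTop (nhds (1 - 0)) :=
    tendsto_const_nhds.sub <| tendsto_const_nhds.div_atTop <|
      tendsto_atTop_add_const_right _ 1 tendsto_id
  rw [sub_zero] at h
  refine h.congr' ?_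
  filter_upwards [eventually_gt_atTop (-1)] with k hk
  have : k + 1 ≠ 0 := by linarith
  field_simp
  ring

/-- Case 3 of Corollary 1: `ω(k) → 1` as `k → ∞` (double-LOS limit). -/
theorem omega_tendsto_one : Tendsto omegaFun atTop (nhds 1) :=
  tendsto_of_tendsto_of_tendsto_of_le_of_le' tendsto_sub_one_div_add_one_atTop tendsto_const_nhds
    (eventually_ge_atTop (1 / 2) |>.mono fun _ => sub_one_div_add_one_le_omegaFun)
    (eventually_ge_atTop 0 |>.mono fun _ => omegaFun_le_one)
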